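/- arXiv:1911.07743 — 8 statements merged into one kernel-verified Lean document; each statement's English description precedes it below -/
import Mathlib

section
/- Let R be an associative ring with identity and N a nilpotent ideal of R of nilpotency index t ≥ 2. Suppose s > 1 is a natural number such that s·n = 0 for all n ∈ N and every prime factor of s is greater than or equal to t. If f ∈ R is such that f + N is a unit of R/N and g ∈ R satisfies (f + N)(g + N) = 1 + N, then f is a unit of R, (f·g)^s = 1, and f^{-1} = g·(f·g)^{s-1}. -/
/-
Write `f * g = 1 + x` with `x ∈ N`. In the binomial expansion of `(1 + x) ^ s` the terms
`C(s, k) x ^ k` with `k ≥ t` vanish since `x ^ t = 0`, and for `0 < k < t` the exponent `k` is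
coprime to `s` (its prime factors are `< t`), so `s ∣ C(s, k)` and the term is killed by
`s • x = 0`. Hence `(f * g) ^ s = 1`; as `f + N` is a unit, `g + N` is a two-sided inverse, so
also `(g * f) ^ s = 1`, and `g * (f * g) ^ (s - 1) = (g * f) ^ (s - 1) * g` is a two-sided
inverse of `f`.
-/

theorem Nat.dvd_choose_of_forall_prime_dvd_le {s t k : ℕ}
    (hfac : ∀ p : ℕ, p.Prime → p ∣ s → t ≤ p) (hk : 0 < k) (hkt : k < t) :
    s ∣ s.choose k := by
  have hcop : s.Coprime k := Nat.coprime_of_dvd fun p hp hps hpk =>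
    absurd ((Nat.le_of_dvd hk hpk).trans_lt hkt) (hfac p hp hps).not_gt
  obtain ⟨j, rfl⟩ := Nat.exists_eq_add_of_lt hk
  refine hcop.dvd_of_dvd_mul_right ⟨(s - 1).choose j, ?_⟩
  rcases s with _ | s
  · simp
  · simpa [add_comm] using (Nat.add_one_mul_choose_eq s j).symm

theorem one_add_pow_eq_one_of_pow_eq_zero {R : Type*} [Ring R] {x : R} {s t : ℕ}
    (hxt : x ^ t = 0) (hsx : s • x = 0) (hfac : ∀ p : ℕ, p.Prime → p ∣ s → t ≤ p) :
    (1 + x) ^ s = 1 := by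
  rw [add_comm, (Commute.one_right x).add_pow, Finset.sum_eq_single 0 _ (by simp)]
  · simp
  intro k _ hk
  rw [one_pow, mul_one]
  rcases lt_or_ge k t with hkt | hkt
  · obtain ⟨m, hm⟩ := Nat.dvd_choose_of_forall_prime_dvd_le hfac (Nat.pos_of_ne_zero hk) hkt
    obtain ⟨j, rfl⟩ := Nat.exists_eq_add_of_lt (Nat.pos_of_ne_zero hk)
    rw [hm, ← nsmul_eq_mul', mul_comm, mul_smul, pow_succ', ← smul_mul_assoc, hsx, zero_mul,
      smul_zero]
  · rw [← Nat.add_sub_cancel' hkt, pow_add, hxt, zero_mul, zero_mul]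

theorem pow_eq_zero_of_forall_list_prod_eq_zero {M : Type*} [MonoidWithZero M] {S : Set M}
    {t : ℕ} (hS : ∀ l : List M, l.length = t → (∀ x ∈ l, x ∈ S) → l.prod = 0) {x : M}
    (hx : x ∈ S) : x ^ t = 0 := by
  simpa using hS (List.replicate t x) (List.length_replicate ..) fun y hy =>
    (List.eq_of_mem_replicate hy).symm ▸ hx

theorem IsUnit.mul_eq_one_symm {M : Type*} [Monoid M] {a b : M} (ha : IsUnit a)
    (hab : a * b = 1) : b * a = 1 := by
  obtain ⟨u, rfl⟩ := ha
  rw [← Units.inv_eq_of_mul_eq_one_right hab, u.inv_mul]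

theorem TwoSidedIdeal.sub_one_mem_of_mk'_eq_one {R : Type*} [Ring R] (N : TwoSidedIdeal R)
    {a : R} (ha : N.ringCon.mk' a = 1) : a - 1 ∈ N :=
  (N.rel_iff a 1).1 (N.ringCon.eq.1 (ha.trans (map_one N.ringCon.mk').symm))

theorem unit_lift_inverse_formula_general {R : Type*} [Ring R] (N : TwoSidedIdeal R) (t : ℕ)
    (hNt : ∀ l : List R, l.length = t → (∀ x ∈ l, x ∈ N) → l.prod = 0)
    (s : ℕ) (hs : 1 < s) (hsN : ∀ n ∈ N, s • n = 0)
    (hfac : ∀ p : ℕ, p.Prime → p ∣ s → t ≤ p)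
    (f g : R) (hf : IsUnit (N.ringCon.mk' f))
    (hfg : N.ringCon.mk' f * N.ringCon.mk' g = 1) :
    IsUnit f ∧ (f * g) ^ s = 1 ∧
      f * (g * (f * g) ^ (s - 1)) = 1 ∧ (g * (f * g) ^ (s - 1)) * f = 1 := by
  have hpow {a : R} (ha : N.ringCon.mk' a = 1) : a ^ s = 1 := by
    have hx := N.sub_one_mem_of_mk'_eq_one ha
    simpa using one_add_pow_eq_one_of_pow_eq_zero
      (pow_eq_zero_of_forall_list_prod_eq_zero (S := N) hNt hx) (hsN _ hx) hfac
  have hfg1 : (f * g) ^ s = 1 := hpow (by rw [map_mul, hfg])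
  have hgf1 : (g * f) ^ s = 1 := hpow (by rw [map_mul, hf.mul_eq_one_symm hfg])
  have hright : f * (g * (f * g) ^ (s - 1)) = 1 := by
    rw [← mul_assoc, ← pow_succ', Nat.sub_add_cancel hs.le, hfg1]
  have hleft : g * (f * g) ^ (s - 1) * f = 1 := by
    rw [← mul_pow_mul, mul_assoc, ← pow_succ, Nat.sub_add_cancel hs.le, hgf1]
  exact ⟨⟨⟨f, _, hright, hleft⟩, rfl⟩, hfg1, hright, hleft⟩

/-- Let `R` be an associative ring with identity and `N` a
nilpotent two-sided ideal of `R` of nilpotency index `t ≥ 2`.  Suppose `s > 1`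
is a natural number such that `s • n = 0` for all `n ∈ N` and every prime factor
of `s` is at least `t`.  If `f + N` is a unit of `R/N` and `g ∈ R` satisfies
`(f + N)(g + N) = 1 + N`, then `f` is a unit of `R`, `(f*g)^s = 1`, and
`f⁻¹ = g * (f*g)^(s-1)`. -/
theorem unit_lift_inverse_formula {R : Type*} [Ring R] (N : TwoSidedIdeal R) (t : ℕ)
    (ht : 2 ≤ t)
    (hNt : ∀ l : List R, l.length = t → (∀ x ∈ l, x ∈ N) → l.prod = 0)
    (hNt' : ∃ l : List R, l.length = t - 1 ∧ (∀ x ∈ l, x ∈ N) ∧ l.prod ≠ 0)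
    (s : ℕ) (hs : 1 < s) (hsN : ∀ n ∈ N, s • n = 0)
    (hfac : ∀ p : ℕ, p.Prime → p ∣ s → t ≤ p)
    (f g : R) (hf : IsUnit (N.ringCon.mk' f))
    (hfg : N.ringCon.mk' f * N.ringCon.mk' g = 1) :
    IsUnit f ∧ (f * g) ^ s = 1 ∧
      f * (g * (f * g) ^ (s - 1)) = 1 ∧ (g * (f * g) ^ (s - 1)) * f = 1 :=
  unit_lift_inverse_formula_general N t hNt s hs hsN hfac f g hf hfg
end

section
/- Let R be a commutative ring with identity and let N_1, ..., N_k be a collection of ideals of R satisfying the CNC-condition, with s_i the characteristic of N_i in N_{i+1}, and set S = s_1 s_2 ⋯ s_{k-1}. Then: (i) for any unit x of R with g ∈ R satisfying (x + N_1)(g + N_1) = 1 + N_1, one has x^{-1} = g^S · x^{S−1}; (ii) if g, h ∈ R satisfy g + N_1 = h + N_1 and g + N_1 is a unit of R/N_1, then g^S = h^S; consequently the map ψ : (R/N_1)* → R* sending g + N_1 to g^S is a well-defined group homomorphism. -/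
lemma cnc_dvd_choose (s e tt : ℕ) (hs : 1 ≤ s) (he : 1 ≤ e) (het : e < tt)
    (hfac : ∀ p : ℕ, p.Prime → p ∣ s → tt ≤ p) : s ∣ Nat.choose s e := by
  have cop : Nat.Coprime s e := by
    by_contra hcop
    have hd : Nat.gcd s e ≠ 1 := hcop
    have hp : (Nat.gcd s e).minFac.Prime := Nat.minFac_prime hd
    have hps : (Nat.gcd s e).minFac ∣ s := dvd_trans (Nat.minFac_dvd _) (Nat.gcd_dvd_left _ _)
    have hpe : (Nat.gcd s e).minFac ∣ e := dvd_trans (Nat.minFac_dvd _) (Nat.gcd_dvd_right _ _)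
    have h1 := hfac _ hp hps
    have h2 := Nat.le_of_dvd he hpe
    omega
  have key : s * Nat.choose (s - 1) (e - 1) = Nat.choose s e * e := by
    have := Nat.add_one_mul_choose_eq (s - 1) (e - 1)
    have hs' : s - 1 + 1 = s := by omega
    have he' : e - 1 + 1 = e := by omega
    simpa [Nat.succ_eq_add_one, hs', he'] using this
  exact cop.dvd_of_dvd_mul_right ⟨_, key.symm⟩

lemma cnc_pow_sub_mem {R : Type*} [CommRing R] (Ni M : Ideal R) (tt ss : ℕ)
    (ht : 2 ≤ tt) (hnil : Ni ^ tt ≤ M) (hs : 1 ≤ ss)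
    (hchar : ∀ x ∈ Ni, ss • x ∈ M)
    (hfac : ∀ p : ℕ, p.Prime → p ∣ ss → tt ≤ p)
    (a b : R) (hab : a - b ∈ Ni) : a ^ ss - b ^ ss ∈ M := by
  set n := a - b with hn
  have ha : a = b + n := by ring
  rw [ha, add_pow, Finset.sum_range_succ]
  simp only [Nat.sub_self, pow_zero, Nat.choose_self, Nat.cast_one, mul_one]
  rw [add_sub_cancel_right]
  apply Ideal.sum_mem
  intro j hj
  rw [Finset.mem_range] at hj
  set e := ss - j with he
  have he1 : 1 ≤ e := by omega
  by_cases hcase : tt ≤ e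
  · -- n ^ e ∈ Ni ^ tt ≤ M
    have hmem : n ^ e ∈ M := by
      have : n ^ e = n ^ tt * n ^ (e - tt) := by rw [← pow_add]; congr 1; omega
      rw [this]
      exact Ideal.mul_mem_right _ _ (hnil (Ideal.pow_mem_pow hab tt))
    exact Ideal.mul_mem_right _ _ (Ideal.mul_mem_left _ _ hmem)
  · -- 1 ≤ e < tt : ss ∣ choose ss j
    have hdvd : ss ∣ Nat.choose ss e := cnc_dvd_choose ss e tt hs he1 (by omega) hfac
    obtain ⟨m, hm⟩ := hdvd
    have hch : Nat.choose ss j = Nat.choose ss e := by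
      rw [he]; exact (Nat.choose_symm (by omega : j ≤ ss)).symm
    have hne : n ^ e ∈ Ni := by
      have : n ^ e = n ^ (e - 1) * n := by rw [← pow_succ]; congr 1; omega
      rw [this]; exact Ideal.mul_mem_left _ _ hab
    have hx : b ^ j * n ^ e * (m : R) ∈ Ni :=
      Ideal.mul_mem_right _ _ (Ideal.mul_mem_left _ _ hne)
    have hsx := hchar _ hx
    have heq : b ^ j * n ^ (ss - j) * (Nat.choose ss j : R)
        = ss • (b ^ j * n ^ e * (m : R)) := by
      rw [hch, hm, nsmul_eq_mul, ← he]
      push_cast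
      ring
    rw [heq]
    exact hsx



/-- Let `R` be a commutative ring with identity and let
`N 1, ..., N k` be ideals of `R` satisfying the CNC-condition, with `s i` the
characteristic of `N i` in `N (i+1)`; set `S = s 1 * ⋯ * s (k-1)`.  Then:
(i) for any unit `x` of `R` and `g ∈ R` with `(x + N 1)(g + N 1) = 1 + N 1`,
one has `x⁻¹ = g ^ S * x ^ (S - 1)`;
(ii) if `g + N 1 = h + N 1` is a unit of `R / N 1` then `g ^ S = h ^ S`;
consequently the map `(R/N 1)ˣ → Rˣ`, `g + N 1 ↦ g ^ S`, is a well-defined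
group homomorphism. -/
theorem cnc_comm_inverse_power_formula {R : Type*} [CommRing R]
    (k : ℕ) (hk : 1 ≤ k) (N : ℕ → Ideal R) (t s : ℕ → ℕ)
    (hbot : N k = ⊥)
    (hchain : ∀ i, 1 ≤ i → i < k → N (i + 1) ≤ N i)
    (ht : ∀ i, 1 ≤ i → i < k → 2 ≤ t i)
    (hnil : ∀ i, 1 ≤ i → i < k → N i ^ t i ≤ N (i + 1))
    (hs : ∀ i, 1 ≤ i → i < k → 1 ≤ s i)
    (hchar : ∀ i, 1 ≤ i → i < k → ∀ x ∈ N i, s i • x ∈ N (i + 1))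
    (hfac : ∀ i, 1 ≤ i → i < k → ∀ p : ℕ, p.Prime → p ∣ s i → t i ≤ p) :
    (∀ x : R, ∀ hx : IsUnit x, ∀ g : R,
      Ideal.Quotient.mk (N 1) x * Ideal.Quotient.mk (N 1) g = 1 →
        (↑hx.unit⁻¹ : R) = g ^ (∏ i ∈ Finset.Icc 1 (k - 1), s i) *
          x ^ ((∏ i ∈ Finset.Icc 1 (k - 1), s i) - 1)) ∧
    (∀ g h : R, Ideal.Quotient.mk (N 1) g = Ideal.Quotient.mk (N 1) h →
      IsUnit (Ideal.Quotient.mk (N 1) g) →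
        g ^ (∏ i ∈ Finset.Icc 1 (k - 1), s i) = h ^ (∏ i ∈ Finset.Icc 1 (k - 1), s i)) ∧
    (∃ ψ : (R ⧸ N 1)ˣ →* Rˣ, ∀ (g : R) (hg : IsUnit (Ideal.Quotient.mk (N 1) g)),
      (ψ hg.unit : R) = g ^ (∏ i ∈ Finset.Icc 1 (k - 1), s i)) := by
  -- Step lemma: one level of the chain
  have step : ∀ j, 1 ≤ j → j < k → ∀ a b : R, a - b ∈ N j →
      a ^ s j - b ^ s j ∈ N (j + 1) := by
    intro j h1 h2 a b hab
    exact cnc_pow_sub_mem (N j) (N (j + 1)) (t j) (s j) (ht j h1 h2) (hnil j h1 h2)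
      (hs j h1 h2) (fun x hx => hchar j h1 h2 x hx) (hfac j h1 h2) a b hab
  -- Key lemma by downward induction along the chain
  have key' : ∀ d j, 1 ≤ j → j + d = k → ∀ a b : R, a - b ∈ N j →
      a ^ (∏ i ∈ Finset.Icc j (k - 1), s i) = b ^ (∏ i ∈ Finset.Icc j (k - 1), s i) := by
    intro d
    induction d with
    | zero =>
      intro j h1 hjk a b hab
      have hje : j = k := by omega
      have hempty : Finset.Icc j (k - 1) = ∅ := by
        apply Finset.Icc_eq_empty; omega
      rw [hempty, Finset.prod_empty, pow_one, pow_one]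
      subst hje
      rw [hbot, Ideal.mem_bot, sub_eq_zero] at hab
      exact hab
    | succ d ih =>
      intro j h1 hjk a b hab
      have hjlt : j < k := by omega
      have hins : Finset.Icc j (k - 1) = insert j (Finset.Icc (j + 1) (k - 1)) := by
        ext m
        simp only [Finset.mem_Icc, Finset.mem_insert]
        omega
      have hnotmem : j ∉ Finset.Icc (j + 1) (k - 1) := by
        simp only [Finset.mem_Icc]; omega
      rw [hins, Finset.prod_insert hnotmem, pow_mul, pow_mul]
      exact ih (j + 1) (by omega) (by omega) _ _ (step j h1 hjlt a b hab)
  have key : ∀ a b : R, Ideal.Quotient.mk (N 1) a = Ideal.Quotient.mk (N 1) b →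
      a ^ (∏ i ∈ Finset.Icc 1 (k - 1), s i) = b ^ (∏ i ∈ Finset.Icc 1 (k - 1), s i) := by
    intro a b hab
    exact key' (k - 1) 1 le_rfl (by omega) a b (Ideal.Quotient.eq.mp hab)
  set S := ∏ i ∈ Finset.Icc 1 (k - 1), s i with hS
  have hS1 : 1 ≤ S := by
    apply Finset.one_le_prod'
    intro i hi
    rw [Finset.mem_Icc] at hi
    exact hs i hi.1 (by omega)
  refine ⟨?_, ?_, ?_⟩
  · -- part (i)
    intro x hx g hxg
    have h1 : Ideal.Quotient.mk (N 1) (x * g) = Ideal.Quotient.mk (N 1) 1 := by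
      rw [map_mul, map_one]; exact hxg
    have h2 : (x * g) ^ S = 1 := by rw [key _ _ h1, one_pow]
    have e : x ^ S = x * x ^ (S - 1) := by
      conv_lhs => rw [show S = S - 1 + 1 by omega]
      rw [pow_succ']
    have hx1 : x * (g ^ S * x ^ (S - 1)) = 1 := by
      rw [mul_pow] at h2
      calc x * (g ^ S * x ^ (S - 1)) = (x * x ^ (S - 1)) * g ^ S := by ring
      _ = x ^ S * g ^ S := by rw [← e]
      _ = 1 := h2
    calc (↑hx.unit⁻¹ : R) = ↑hx.unit⁻¹ * (x * (g ^ S * x ^ (S - 1))) := by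
          rw [hx1, mul_one]
      _ = (↑hx.unit⁻¹ * ↑hx.unit) * (g ^ S * x ^ (S - 1)) := by
          rw [hx.unit_spec, mul_assoc]
      _ = g ^ S * x ^ (S - 1) := by rw [Units.inv_mul, one_mul]
  · -- part (ii)
    intro g h hgh _
    exact key g h hgh
  · -- part (iii)
    have hsurj := Ideal.Quotient.mk_surjective (I := N 1)
    set rep : R ⧸ N 1 → R := fun q => (hsurj q).choose with hrepdef
    have hrep : ∀ q, Ideal.Quotient.mk (N 1) (rep q) = q := fun q => (hsurj q).choose_spec
    have hunit : ∀ u : (R ⧸ N 1)ˣ, rep (↑u) ^ S * rep (↑u⁻¹) ^ S = 1 := by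
      intro u
      rw [← mul_pow]
      have : Ideal.Quotient.mk (N 1) (rep (↑u) * rep (↑u⁻¹)) = Ideal.Quotient.mk (N 1) 1 := by
        rw [map_mul, hrep, hrep, map_one, Units.mul_inv]
      rw [key _ _ this, one_pow]
    set F : (R ⧸ N 1)ˣ → Rˣ := fun u =>
      ⟨rep (↑u) ^ S, rep (↑u⁻¹) ^ S, hunit u, by rw [mul_comm]; exact hunit u⟩ with hF
    have hmul : ∀ u v : (R ⧸ N 1)ˣ, F (u * v) = F u * F v := by
      intro u v
      ext
      show rep (↑(u * v)) ^ S = rep (↑u) ^ S * rep (↑v) ^ S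
      rw [← mul_pow]
      apply key
      rw [map_mul, hrep, hrep, hrep, Units.val_mul]
    refine ⟨MonoidHom.mk' F hmul, ?_⟩
    intro g hg
    show rep (↑hg.unit) ^ S = g ^ S
    apply key
    rw [hrep, hg.unit_spec]
end

section
/- Let R be a commutative ring with identity, a ∈ R a nilpotent element of index k (a^k = 0, a^{k−1} ≠ 0), and let s > 1 be the characteristic of the quotient ring R/⟨a⟩, where ⟨a⟩ is the principal ideal generated by a. Then f + ⟨a⟩ is a unit of R/⟨a⟩ if and only if f + ⟨a⟩ ⊆ R*, and for each x ∈ f + ⟨a⟩, x^{-1} = g·(x·g)^{s^{k−1} − 1}, where g ∈ R is any element with (f + ⟨a⟩)(g + ⟨a⟩) = 1 + ⟨a⟩. Moreover, if R is finite, |R*| = |(R/⟨a⟩)*| · |⟨a⟩|. -/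
/-!
Let `I = ⟨a⟩`, so `I ^ k = 0`, and `s ∈ I` since `s` kills `R/I`. If `y ≡ 1 mod I` then
`y ^ s - 1 = (y - 1) * (1 + y + ⋯ + y ^ (s - 1))` and the second factor is `≡ s ≡ 0 mod I`, so
raising to the `s`-th power pushes `y - 1` one power of `I` deeper. Hence `y ^ s ^ (k - 1) = 1`;
applied to `y = x * g` this is the inverse formula. Since `I` is nilpotent, units lift along
`R → R/I`, so `Rˣ → (R/I)ˣ` is onto, and its kernel `1 + I` is in bijection with `I`.
-/

open Finset

namespace Ideal

variable {R : Type*} [CommRing R] {I J : Ideal R} {s : ℕ}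

theorem geom_sum_mem_of_sub_one_mem (hs : (s : R) ∈ I) {y : R} (hy : y - 1 ∈ I) :
    ∑ i ∈ range s, y ^ i ∈ I := by
  rw [← Quotient.eq_zero_iff_mem] at hs ⊢
  have hy1 : Quotient.mk I y = 1 := by rw [← map_one (Quotient.mk I)]; exact Quotient.eq.mpr hy
  simpa [map_sum, hy1] using hs

theorem pow_sub_one_mem_mul (hs : (s : R) ∈ I) (hJ : J ≤ I) {y : R} (hy : y - 1 ∈ J) :
    y ^ s - 1 ∈ I * J := by
  rw [← geom_sum_mul]
  exact mul_mem_mul (geom_sum_mem_of_sub_one_mem hs (hJ hy)) hy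

theorem pow_pow_sub_one_mem_pow_succ (hs : (s : R) ∈ I) {y : R} (hy : y - 1 ∈ I) (j : ℕ) :
    y ^ s ^ j - 1 ∈ I ^ (j + 1) := by
  induction j with
  | zero => simpa using hy
  | succ j ih =>
    rw [pow_succ s, pow_mul, pow_succ' I]
    exact pow_sub_one_mem_mul hs (pow_le_self j.succ_ne_zero) ih

theorem pow_pow_eq_one_of_pow_eq_bot (hs : (s : R) ∈ I) {n : ℕ} (hI : I ^ n = ⊥) {y : R}
    (hy : y - 1 ∈ I) : y ^ s ^ (n - 1) = 1 := by
  have h := pow_le_pow_right (by omega : n ≤ n - 1 + 1) (pow_pow_sub_one_mem_pow_succ hs hy (n - 1))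
  rwa [hI, mem_bot, sub_eq_zero] at h

theorem mul_eq_one_of_pow_eq_bot (hs : (s : R) ∈ I) (hs₀ : 0 < s) {n : ℕ} (hI : I ^ n = ⊥)
    {x g : R} (hxg : x * g - 1 ∈ I) : x * (g * (x * g) ^ (s ^ (n - 1) - 1)) = 1 :=
  calc x * (g * (x * g) ^ (s ^ (n - 1) - 1))
      = (x * g) ^ (s ^ (n - 1) - 1 + 1) := by rw [← mul_assoc, pow_succ']
    _ = (x * g) ^ s ^ (n - 1) := by rw [Nat.sub_add_cancel (Nat.one_le_pow _ _ hs₀)]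
    _ = 1 := pow_pow_eq_one_of_pow_eq_bot hs hI hxg

theorem _root_.IsNilpotent.isLocalHom_quotient_mk (hI : IsNilpotent I) :
    IsLocalHom (Quotient.mk I) :=
  ⟨fun _ hx => hI.isUnit_quotient_mk_iff.mp hx⟩

theorem mem_ker_unitsMap_quotient_mk {u : Rˣ} :
    u ∈ (Units.map (Quotient.mk I).toMonoidHom).ker ↔ (u : R) - 1 ∈ I := by
  rw [MonoidHom.mem_ker, Units.ext_iff, ← Quotient.eq]
  simp

variable (I) [IsLocalHom (Quotient.mk I)]

noncomputable def kerUnitsMapQuotientMkEquiv :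
    (Units.map (Quotient.mk I).toMonoidHom).ker ≃ I where
  toFun u := ⟨(u : Rˣ) - 1, mem_ker_unitsMap_quotient_mk.mp u.2⟩
  invFun t := by
    have ht : Quotient.mk I (1 + t) = 1 := by
      rw [map_add, map_one, Quotient.eq_zero_iff_mem.mpr t.2, add_zero]
    refine ⟨(isUnit_of_map_unit (Quotient.mk I) _ (ht ▸ isUnit_one)).unit, ?_⟩
    rw [mem_ker_unitsMap_quotient_mk, IsUnit.unit_spec, add_sub_cancel_left]
    exact t.2
  left_inv u := by ext; simp
  right_inv t := by ext; simp

theorem card_units_eq_card_units_quotient_mul_card :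
    Nat.card Rˣ = Nat.card (R ⧸ I)ˣ * Nat.card I := by
  set φ := Units.map (Quotient.mk I).toMonoidHom
  have hφ : Function.Surjective φ :=
    IsLocalRing.surjective_units_map_of_local_ringHom _ Quotient.mk_surjective inferInstance
  rw [φ.ker.card_eq_card_quotient_mul_card_subgroup,
    Nat.card_congr (QuotientGroup.quotientKerEquivOfSurjective φ hφ).toEquiv,
    Nat.card_congr (kerUnitsMapQuotientMkEquiv I)]

end Ideal

theorem nilpotent_element_unit_lift_general {R : Type*} [CommRing R] (a : R) (k : ℕ)
    (hak : a ^ k = 0)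
    (s : ℕ) (hs : 1 < s) (hchar : CharP (R ⧸ Ideal.span {a}) s) (f : R) :
    (IsUnit (Ideal.Quotient.mk (Ideal.span {a}) f) ↔
      ∀ x : R, x - f ∈ Ideal.span {a} → IsUnit x) ∧
    (∀ g : R, Ideal.Quotient.mk (Ideal.span {a}) f * Ideal.Quotient.mk (Ideal.span {a}) g = 1 →
      ∀ x : R, x - f ∈ Ideal.span {a} →
        x * (g * (x * g) ^ (s ^ (k - 1) - 1)) = 1) ∧
    (Finite R → Nat.card Rˣ = Nat.card (R ⧸ Ideal.span {a})ˣ * Nat.card (Ideal.span {a})) := by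
  set I := Ideal.span {a}
  have hIk : I ^ k = ⊥ := by rw [Ideal.span_singleton_pow, hak, Ideal.span_singleton_eq_bot]
  have hI : IsNilpotent I := ⟨k, hIk⟩
  have hsI : (s : R) ∈ I := by
    rw [← Ideal.Quotient.eq_zero_iff_mem, map_natCast]
    exact CharP.cast_eq_zero _ s
  have := hI.isLocalHom_quotient_mk
  refine ⟨⟨fun hf x hx => ?_, fun h => (h f (by simp)).map _⟩, fun g hfg x hx => ?_,
    fun _ => Ideal.card_units_eq_card_units_quotient_mul_card I⟩
  · rwa [← hI.isUnit_quotient_mk_iff, Ideal.Quotient.eq.mpr hx]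
  · refine Ideal.mul_eq_one_of_pow_eq_bot hsI (by omega) hIk ?_
    rw [← Ideal.Quotient.eq, map_mul, Ideal.Quotient.eq.mpr hx, hfg, map_one]

/-- Let `R` be a commutative ring with identity, `a ∈ R` a
nilpotent element of index `k` (`a^k = 0`, `a^(k-1) ≠ 0`), and `s > 1` the
characteristic of the quotient ring `R/⟨a⟩`.  Then `f + ⟨a⟩` is a unit of
`R/⟨a⟩` iff every element of `f + ⟨a⟩` is a unit of `R`; for each `x ∈ f + ⟨a⟩`,
`x⁻¹ = g * (x*g) ^ (s^(k-1) - 1)` where `g` is any element with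
`(f + ⟨a⟩)(g + ⟨a⟩) = 1 + ⟨a⟩`; and if `R` is finite then
`|Rˣ| = |(R/⟨a⟩)ˣ| * |⟨a⟩|`. -/
theorem nilpotent_element_unit_lift {R : Type*} [CommRing R] (a : R) (k : ℕ)
    (hak : a ^ k = 0) (hak' : a ^ (k - 1) ≠ 0)
    (s : ℕ) (hs : 1 < s) (hchar : CharP (R ⧸ Ideal.span {a}) s) (f : R) :
    (IsUnit (Ideal.Quotient.mk (Ideal.span {a}) f) ↔
      ∀ x : R, x - f ∈ Ideal.span {a} → IsUnit x) ∧
    (∀ g : R, Ideal.Quotient.mk (Ideal.span {a}) f * Ideal.Quotient.mk (Ideal.span {a}) g = 1 →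
      ∀ x : R, x - f ∈ Ideal.span {a} →
        x * (g * (x * g) ^ (s ^ (k - 1) - 1)) = 1) ∧
    (Finite R → Nat.card Rˣ = Nat.card (R ⧸ Ideal.span {a})ˣ * Nat.card (Ideal.span {a})) :=
  nilpotent_element_unit_lift_general a k hak s hs hchar f
end

section
/- Let R be a commutative ring with identity, n ≥ 1, and let N_1, ..., N_k be a collection of ideals of R satisfying the CNC-condition, with s_i the characteristic of N_i in N_{i+1}. Let M_n(R) be the ring of n × n matrices over R and for an ideal N of R let M_n(N) denote the ideal of matrices all of whose entries lie in N. For f = [f_{ij}] ∈ M_n(R), the matrix [f_{ij} + N_1] is a unit of M_n(R/N_1) if and only if f + M_n(N_1) ⊆ (M_n(R))*. Furthermore, for each x ∈ f + M_n(N_1), x^{-1} = g·(x·g)^{s_1 s_2 ⋯ s_{k-1} − 1}, where g = [g_{ij}] ∈ M_n(R) is any matrix with [f_{ij} + N_1]·[g_{ij} + N_1] equal to the identity matrix of M_n(R/N_1). -/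
section CNCAux

variable {R : Type*} [CommRing R] {n : ℕ}

lemma cnc_entries_mul_left (I : Ideal R) (A B : Matrix (Fin n) (Fin n) R)
    (hA : ∀ i j, A i j ∈ I) : ∀ i j, (A * B) i j ∈ I := by
  intro i j
  rw [Matrix.mul_apply]
  exact Ideal.sum_mem _ fun l _ => I.mul_mem_right _ (hA i l)

lemma cnc_entries_mul (I J : Ideal R) (A B : Matrix (Fin n) (Fin n) R)
    (hA : ∀ i j, A i j ∈ I) (hB : ∀ i j, B i j ∈ J) :
    ∀ i j, (A * B) i j ∈ I * J := by
  intro i j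
  rw [Matrix.mul_apply]
  exact Ideal.sum_mem _ fun l _ => Ideal.mul_mem_mul (hA i l) (hB l j)

lemma cnc_entries_pow (I : Ideal R) (A : Matrix (Fin n) (Fin n) R)
    (hA : ∀ i j, A i j ∈ I) : ∀ m i j, (A ^ (m + 1)) i j ∈ I ^ (m + 1) := by
  intro m
  induction m with
  | zero => intro i j; simpa using hA i j
  | succ m ih =>
    intro i j
    rw [pow_succ, pow_succ]
    exact cnc_entries_mul _ _ _ _ ih hA i j

lemma cnc_dvd_choose_s10 {s t m : ℕ} (hm1 : 1 ≤ m) (hmt : m < t) (hs : 1 ≤ s)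
    (hfac : ∀ p : ℕ, p.Prime → p ∣ s → t ≤ p) : s ∣ Nat.choose s m := by
  have key : s ∣ Nat.choose s m * m := by
    rcases Nat.exists_eq_add_of_le hs with ⟨s', rfl⟩
    rcases Nat.exists_eq_add_of_le hm1 with ⟨m', rfl⟩
    rw [Nat.add_comm 1 s', Nat.add_comm 1 m', ← Nat.add_one_mul_choose_eq]
    exact Dvd.intro _ rfl
  have hcop : Nat.Coprime s m := by
    by_contra h
    have h2 : 2 ≤ Nat.gcd s m := by
      have h0 : Nat.gcd s m ≠ 0 := fun hg => by
        have := Nat.eq_zero_of_gcd_eq_zero_left hg; omega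
      have h1 : Nat.gcd s m ≠ 1 := h
      omega
    have hpp : (Nat.gcd s m).minFac.Prime := Nat.minFac_prime (by omega)
    have hps : (Nat.gcd s m).minFac ∣ s :=
      dvd_trans (Nat.minFac_dvd _) (Nat.gcd_dvd_left _ _)
    have hpm : (Nat.gcd s m).minFac ∣ m :=
      dvd_trans (Nat.minFac_dvd _) (Nat.gcd_dvd_right _ _)
    have h3 := hfac _ hpp hps
    have h4 := Nat.le_of_dvd (by omega) hpm
    omega
  exact hcop.dvd_of_dvd_mul_right key

/-- key step: if `u ≡ 1 mod I` entrywise then `u ^ s ≡ 1 mod J`. -/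
lemma cnc_step (I J : Ideal R) (s t : ℕ) (hs : 1 ≤ s) (ht : 2 ≤ t)
    (hnil : I ^ t ≤ J) (hchar : ∀ x ∈ I, s • x ∈ J)
    (hfac : ∀ p : ℕ, p.Prime → p ∣ s → t ≤ p)
    (u : Matrix (Fin n) (Fin n) R) (hu : ∀ i j, (u - 1) i j ∈ I) :
    ∀ i j, (u ^ s - 1) i j ∈ J := by
  intro i j
  set A := u - 1 with hA
  have hu' : u = A + 1 := by rw [hA]; abel
  have hrw : ∀ m : ℕ, A ^ m * 1 ^ (s - m) * (↑(s.choose m) : Matrix (Fin n) (Fin n) R)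
      = (s.choose m) • A ^ m := by
    intro m
    rw [one_pow, mul_one, ← (Nat.cast_commute (s.choose m) (A ^ m)).eq, ← nsmul_eq_mul]
  have hbin : u ^ s - 1 = ∑ m ∈ Finset.range s, (s.choose (m + 1)) • A ^ (m + 1) := by
    rw [hu', (Commute.one_right A).add_pow s, Finset.sum_range_succ']
    simp only [hrw]
    simp
  rw [hbin, Matrix.sum_apply]
  refine Ideal.sum_mem _ fun m _ => ?_
  have hAm : (A ^ (m + 1)) i j ∈ I ^ (m + 1) := cnc_entries_pow I A hu m i j
  rw [Matrix.smul_apply]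
  rcases Nat.lt_or_ge (m + 1) t with hlt | hge
  · obtain ⟨c, hc⟩ := cnc_dvd_choose_s10 (by omega) hlt hs hfac
    have hmem : (A ^ (m + 1)) i j ∈ I := Ideal.pow_le_self (by omega) hAm
    rw [hc, mul_comm, mul_smul, nsmul_eq_mul]
    exact Ideal.mul_mem_left _ _ (hchar _ hmem)
  · have hmem : (A ^ (m + 1)) i j ∈ J := hnil (Ideal.pow_le_pow_right hge hAm)
    rw [nsmul_eq_mul]
    exact Ideal.mul_mem_left _ _ hmem

end CNCAux

/-- Let `R` be a commutative ring with identity, `n ≥ 1`, and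
`N 1, ..., N k` ideals of `R` satisfying the CNC-condition, with `s i` the
characteristic of `N i` in `N (i+1)`; set `S = s 1 * ⋯ * s (k-1)`.  For
`f ∈ Mₙ(R)`, the reduced matrix `[f i j + N 1]` is a unit of `Mₙ(R/N 1)` iff
every matrix congruent to `f` entrywise modulo `N 1` is a unit of `Mₙ(R)`;
furthermore for each such `x`, `x⁻¹ = g * (x*g) ^ (S - 1)` where `g` is any
matrix with `[f i j + N 1] * [g i j + N 1] = 1`. -/
theorem cnc_matrix_unit_lift {R : Type*} [CommRing R] (n : ℕ) (hn : 1 ≤ n)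
    (k : ℕ) (hk : 1 ≤ k) (N : ℕ → Ideal R) (t s : ℕ → ℕ)
    (hbot : N k = ⊥)
    (hchain : ∀ i, 1 ≤ i → i < k → N (i + 1) ≤ N i)
    (ht : ∀ i, 1 ≤ i → i < k → 2 ≤ t i)
    (hnil : ∀ i, 1 ≤ i → i < k → N i ^ t i ≤ N (i + 1))
    (hs : ∀ i, 1 ≤ i → i < k → 1 ≤ s i)
    (hchar : ∀ i, 1 ≤ i → i < k → ∀ x ∈ N i, s i • x ∈ N (i + 1))
    (hfac : ∀ i, 1 ≤ i → i < k → ∀ p : ℕ, p.Prime → p ∣ s i → t i ≤ p)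
    (f : Matrix (Fin n) (Fin n) R) :
    (IsUnit ((Ideal.Quotient.mk (N 1)).mapMatrix f) ↔
      ∀ x : Matrix (Fin n) (Fin n) R, (∀ i j, (x - f) i j ∈ N 1) → IsUnit x) ∧
    (∀ g : Matrix (Fin n) (Fin n) R,
      (Ideal.Quotient.mk (N 1)).mapMatrix f * (Ideal.Quotient.mk (N 1)).mapMatrix g = 1 →
      ∀ x : Matrix (Fin n) (Fin n) R, (∀ i j, (x - f) i j ∈ N 1) →
        x * (g * (x * g) ^ ((∏ i ∈ Finset.Icc 1 (k - 1), s i) - 1)) = 1 ∧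
        (g * (x * g) ^ ((∏ i ∈ Finset.Icc 1 (k - 1), s i) - 1)) * x = 1) := by
  set S := ∏ i ∈ Finset.Icc 1 (k - 1), s i with hS
  have hS1 : 1 ≤ S := Finset.one_le_prod' fun i hi => by
    rw [Finset.mem_Icc] at hi
    exact hs i hi.1 (by omega)
  have main : ∀ g : Matrix (Fin n) (Fin n) R,
      (Ideal.Quotient.mk (N 1)).mapMatrix f * (Ideal.Quotient.mk (N 1)).mapMatrix g = 1 →
      ∀ x : Matrix (Fin n) (Fin n) R, (∀ i j, (x - f) i j ∈ N 1) →
        x * (g * (x * g) ^ (S - 1)) = 1 ∧ (g * (x * g) ^ (S - 1)) * x = 1 := by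
    intro g hg x hx
    -- f * g ≡ 1 mod N 1 entrywise
    have hfg : ∀ i j, (f * g - 1) i j ∈ N 1 := by
      intro i j
      have h1 : (Ideal.Quotient.mk (N 1)).mapMatrix (f * g)
          = (Ideal.Quotient.mk (N 1)).mapMatrix 1 := by
        rw [map_mul, map_one, hg]
      have h2 : Ideal.Quotient.mk (N 1) ((f * g) i j)
          = Ideal.Quotient.mk (N 1) ((1 : Matrix (Fin n) (Fin n) R) i j) := by
        have := congrFun (congrFun h1 i) j
        simpa [RingHom.mapMatrix_apply, Matrix.map_apply] using this
      rw [Matrix.sub_apply, ← Ideal.Quotient.eq]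
      exact h2
    -- x * g ≡ 1 mod N 1 entrywise
    have hxg1 : ∀ i j, (x * g - 1) i j ∈ N 1 := by
      intro i j
      have heq : x * g - 1 = (x - f) * g + (f * g - 1) := by rw [sub_mul]; abel
      rw [heq, Matrix.add_apply]
      exact Ideal.add_mem _ (cnc_entries_mul_left (N 1) _ g hx i j) (hfg i j)
    -- main induction
    have key : ∀ i, 1 ≤ i → i ≤ k →
        ∀ a b, ((x * g) ^ (∏ j ∈ Finset.Icc 1 (i - 1), s j) - 1) a b ∈ N i := by
      intro i h1
      induction i, h1 using Nat.le_induction with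
      | base =>
        intro _ a b
        simpa using hxg1 a b
      | succ i hi ih =>
        intro hik a b
        have hik' : i < k := by omega
        have hprod : ∏ j ∈ Finset.Icc 1 (i + 1 - 1), s j
            = (∏ j ∈ Finset.Icc 1 (i - 1), s j) * s i := by
          have h := Finset.prod_Icc_succ_top (a := 1) (b := i - 1) (by omega) s
          rw [Nat.sub_add_cancel hi] at h
          simpa using h
        rw [hprod, pow_mul]
        exact cnc_step (N i) (N (i + 1)) (s i) (t i) (hs i hi hik') (ht i hi hik')
          (hnil i hi hik') (hchar i hi hik') (hfac i hi hik') _ (ih (by omega)) a b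
    have hXg : (x * g) ^ S = 1 := by
      have h := key k hk le_rfl
      rw [hbot] at h
      ext a b
      have h' := h a b
      rw [Ideal.mem_bot, Matrix.sub_apply, sub_eq_zero] at h'
      exact h'
    have h1 : x * (g * (x * g) ^ (S - 1)) = 1 := by
      rw [← mul_assoc, ← pow_succ' (x * g) (S - 1), Nat.sub_add_cancel hS1, hXg]
    exact ⟨h1, mul_eq_one_comm.mp h1⟩
  refine ⟨⟨fun hu x hx => ?_, fun h => ?_⟩, main⟩
  · -- lift the inverse of the reduced matrix
    set F := (Ideal.Quotient.mk (N 1)).mapMatrix f with hF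
    set G : Matrix (Fin n) (Fin n) (R ⧸ N 1) := ↑hu.unit⁻¹ with hG
    choose g hgspec using fun i j => Ideal.Quotient.mk_surjective (I := N 1) (G i j)
    have hmapg : (Ideal.Quotient.mk (N 1)).mapMatrix (Matrix.of g) = G := by
      ext i j
      simpa [RingHom.mapMatrix_apply, Matrix.map_apply] using hgspec i j
    have hfG : F * (Ideal.Quotient.mk (N 1)).mapMatrix (Matrix.of g) = 1 := by
      rw [hmapg, hG]
      exact hu.mul_val_inv
    obtain ⟨heq1, heq2⟩ := main (Matrix.of g) hfG x hx
    exact ⟨⟨x, Matrix.of g * (x * Matrix.of g) ^ (S - 1), heq1, heq2⟩, rfl⟩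
  · have hf : IsUnit f := h f (by simp)
    exact hf.map (Ideal.Quotient.mk (N 1)).mapMatrix
end

section
/- Let R be a finite commutative ring with identity, n ≥ 1, and let N_1, ..., N_k be a collection of ideals of R satisfying the CNC-condition. Then |(M_n(R))*| = |(M_n(R/N_1))*| · |N_1|^{n²}. -/
/-!
Reduction modulo `N 1` maps `Mₙ(R)ˣ` onto `Mₙ(R ⧸ N 1)ˣ`: the inclusions `N i ^ t i ≤ N (i + 1)`
and `N k = 0` make `N 1` nilpotent, so a matrix over `R` is invertible as soon as its reduction is (look at the
determinant). The kernel of this surjection is `1 + Mₙ(N 1)`, which has `|N 1| ^ (n²)` elements.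
-/

open Function

theorem Ideal.isNilpotent_of_pow_le {R : Type*} [CommSemiring R] {I J : Ideal R} {t : ℕ}
    (hIJ : I ^ t ≤ J) (hJ : IsNilpotent J) : IsNilpotent I := by
  obtain ⟨m, hm⟩ := hJ
  refine ⟨t * m, le_bot_iff.mp ?_⟩
  calc I ^ (t * m) = (I ^ t) ^ m := pow_mul I t m
    _ ≤ J ^ m := Ideal.pow_right_mono hIJ m
    _ = ⊥ := hm

theorem Ideal.isNilpotent_of_pow_le_succ {R : Type*} [CommSemiring R] {k : ℕ} {N : ℕ → Ideal R}
    {t : ℕ → ℕ} (hbot : N k = ⊥) (hnil : ∀ i, 1 ≤ i → i < k → N i ^ t i ≤ N (i + 1))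
    {i : ℕ} (hi : 1 ≤ i) (hik : i ≤ k) : IsNilpotent (N i) := by
  refine Nat.decreasingInduction' (P := fun j => IsNilpotent (N j)) ?_ hik ⟨1, by simp [hbot]⟩
  exact fun j hjk hij ih => Ideal.isNilpotent_of_pow_le (hnil j (hi.trans hij) hjk) ih

theorem Ideal.isLocalHom_quotientMk_of_isNilpotent {R : Type*} [CommRing R] {I : Ideal R}
    (hI : IsNilpotent I) : IsLocalHom (Ideal.Quotient.mk I) :=
  ⟨fun _ => hI.isUnit_quotient_mk_iff.mp⟩

namespace RingHom

section Units

variable {R S : Type*} [Ring R] [Ring S] (f : R →+* S) [IsLocalHom f]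

theorem isUnit_one_add_of_mem_ker {x : R} (hx : x ∈ ker f) : IsUnit (1 + x) :=
  (isUnit_map_iff f _).mp (by simp [mem_ker.mp hx])

noncomputable def unitsMapKerEquivKer : (Units.map (f : R →* S)).ker ≃ ker f where
  toFun u := ⟨(u : Rˣ) - 1, by
    rw [mem_ker, map_sub, map_one, sub_eq_zero]
    exact congrArg Units.val (MonoidHom.mem_ker.mp u.2)⟩
  invFun x := ⟨(isUnit_one_add_of_mem_ker f x.2).unit, by
    simp [MonoidHom.mem_ker, Units.ext_iff, mem_ker.mp x.2]⟩
  left_inv u := by ext; simp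
  right_inv x := by ext; simp

theorem card_units_eq_card_units_mul_card_ker (hf : Surjective f) :
    Nat.card Rˣ = Nat.card Sˣ * Nat.card (ker f) := by
  have hunits := IsLocalRing.surjective_units_map_of_local_ringHom f hf ‹_›
  rw [Subgroup.card_eq_card_quotient_mul_card_subgroup (Units.map (f : R →* S)).ker]
  exact congr_arg₂ (· * ·)
    (Nat.card_congr (QuotientGroup.quotientKerEquivOfSurjective _ hunits).toEquiv)
    (Nat.card_congr (unitsMapKerEquivKer f))

end Units

section Matrix

variable {n R S : Type*} [Fintype n] [DecidableEq n]

theorem mapMatrix_surjective [Ring R] [Ring S] {f : R →+* S} (hf : Surjective f) :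
    Surjective (f.mapMatrix : Matrix n n R →+* Matrix n n S) :=
  fun B => ⟨B.map (surjInv hf), by ext; simp [surjInv_eq hf]⟩

def kerMapMatrixEquiv [Ring R] [Ring S] (f : R →+* S) :
    ker (f.mapMatrix : Matrix n n R →+* Matrix n n S) ≃ Matrix n n (ker f) :=
  calc ker (f.mapMatrix : Matrix n n R →+* Matrix n n S)
      ≃ {A : Matrix n n R // ∀ i j, A i j ∈ ker f} :=
        Equiv.subtypeEquivRight fun A => by simp [mem_ker, ← Matrix.ext_iff]
    _ ≃ Matrix n n (ker f) :=
        Equiv.subtypePiEquivPi.trans (Equiv.piCongrRight fun _ => Equiv.subtypePiEquivPi)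

theorem card_ker_mapMatrix [Ring R] [Ring S] (f : R →+* S) :
    Nat.card (ker (f.mapMatrix : Matrix n n R →+* Matrix n n S)) =
      Nat.card (ker f) ^ (Fintype.card n ^ 2) := by
  rw [Nat.card_congr (kerMapMatrixEquiv f), Matrix, Nat.card_fun, Nat.card_fun,
    Nat.card_eq_fintype_card (α := n), ← pow_mul, sq]

instance isLocalHom_mapMatrix [CommRing R] [CommRing S] (f : R →+* S) [IsLocalHom f] :
    IsLocalHom (f.mapMatrix : Matrix n n R →+* Matrix n n S) :=
  ⟨fun A hA => by
    rw [Matrix.isUnit_iff_isUnit_det] at hA ⊢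
    exact (isUnit_map_iff f _).mp (by rwa [map_det])⟩

end Matrix

end RingHom

theorem Matrix.card_units_eq_card_units_quotient_mul {n R : Type*} [Fintype n] [DecidableEq n]
    [CommRing R] {I : Ideal R} (hI : IsNilpotent I) :
    Nat.card (Matrix n n R)ˣ =
      Nat.card (Matrix n n (R ⧸ I))ˣ * Nat.card I ^ (Fintype.card n ^ 2) := by
  have := Ideal.isLocalHom_quotientMk_of_isNilpotent hI
  rw [RingHom.card_units_eq_card_units_mul_card_ker (Ideal.Quotient.mk I).mapMatrix
      (RingHom.mapMatrix_surjective Ideal.Quotient.mk_surjective),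
    RingHom.card_ker_mapMatrix, Ideal.mk_ker]

theorem cnc_card_matrix_units_general {R : Type*} [CommRing R] (n : ℕ)
    (k : ℕ) (hk : 1 ≤ k) (N : ℕ → Ideal R) (t : ℕ → ℕ)
    (hbot : N k = ⊥)
    (hnil : ∀ i, 1 ≤ i → i < k → N i ^ t i ≤ N (i + 1)) :
    Nat.card (Matrix (Fin n) (Fin n) R)ˣ =
      Nat.card (Matrix (Fin n) (Fin n) (R ⧸ N 1))ˣ * Nat.card (N 1) ^ (n ^ 2) := by
  simpa using Matrix.card_units_eq_card_units_quotient_mul (n := Fin n)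
    (Ideal.isNilpotent_of_pow_le_succ hbot hnil le_rfl hk)

/-- Let `R` be a finite commutative ring with identity,
`n ≥ 1`, and `N 1, ..., N k` ideals of `R` satisfying the CNC-condition.  Then
`|Mₙ(R)ˣ| = |Mₙ(R/N 1)ˣ| * |N 1| ^ (n²)`. -/
theorem cnc_card_matrix_units {R : Type*} [CommRing R] [Finite R] (n : ℕ) (hn : 1 ≤ n)
    (k : ℕ) (hk : 1 ≤ k) (N : ℕ → Ideal R) (t s : ℕ → ℕ)
    (hbot : N k = ⊥)
    (hchain : ∀ i, 1 ≤ i → i < k → N (i + 1) ≤ N i)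
    (ht : ∀ i, 1 ≤ i → i < k → 2 ≤ t i)
    (hnil : ∀ i, 1 ≤ i → i < k → N i ^ t i ≤ N (i + 1))
    (hs : ∀ i, 1 ≤ i → i < k → 1 ≤ s i)
    (hchar : ∀ i, 1 ≤ i → i < k → ∀ x ∈ N i, s i • x ∈ N (i + 1))
    (hfac : ∀ i, 1 ≤ i → i < k → ∀ p : ℕ, p.Prime → p ∣ s i → t i ≤ p) :
    Nat.card (Matrix (Fin n) (Fin n) R)ˣ =
      Nat.card (Matrix (Fin n) (Fin n) (R ⧸ N 1))ˣ * Nat.card (N 1) ^ (n ^ 2) :=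
  cnc_card_matrix_units_general n k hk N t hbot hnil
end

section
/- Let R be a commutative ring with identity, N a nilpotent ideal of R of nilpotency index k ≥ 2, and s > 1 the characteristic of R/N. For f = [f_{ij}] ∈ M_n(R), the matrix [f_{ij} + N] is a unit of M_n(R/N) if and only if f + M_n(N) ⊆ (M_n(R))*, and for each x ∈ f + M_n(N), x^{-1} = g·(x·g)^{s^{k−1} − 1}, where g = [g_{ij}] ∈ M_n(R) is any matrix with [f_{ij} + N]·[g_{ij} + N] equal to the identity matrix of M_n(R/N). Moreover, if R is finite, |(M_n(R))*| = |(M_n(R/N))*| · |N|^{n²}. -/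
section Aux

variable {R : Type*} [CommRing R] {n : ℕ}

private lemma entries_mul_mem {I J : Ideal R} {A B : Matrix (Fin n) (Fin n) R}
    (hA : ∀ i j, A i j ∈ I) (hB : ∀ i j, B i j ∈ J) :
    ∀ i j, (A * B) i j ∈ I * J := by
  intro i j
  rw [Matrix.mul_apply]
  exact sum_mem fun l _ => Ideal.mul_mem_mul (hA i l) (hB l j)

private lemma entries_pow_mem {I : Ideal R} {A : Matrix (Fin n) (Fin n) R}
    (hA : ∀ i j, A i j ∈ I) : ∀ t, 1 ≤ t → ∀ i j, (A ^ t) i j ∈ I ^ t := by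
  intro t
  induction t with
  | zero => omega
  | succ t ih =>
    intro _ i j
    rcases Nat.eq_or_lt_of_le (Nat.zero_le t) with h0 | h1
    · subst h0; simpa using hA i j
    · rw [pow_succ, pow_succ]
      exact entries_mul_mem (ih h1) hA i j

/-- Key lemma: if `A ≡ 1` entrywise mod `N`, `(s : R) ∈ N` and `N ^ k = ⊥`,
then `A ^ (s ^ (k-1)) = 1`. -/
private lemma pow_char_eq_one {N : Ideal R} {k s : ℕ} (hk : 2 ≤ k) (hNk : N ^ k = ⊥)
    (hs : 1 ≤ s) (hsN : (s : R) ∈ N) {A : Matrix (Fin n) (Fin n) R}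
    (hA : ∀ i j, (A - 1) i j ∈ N) : A ^ (s ^ (k - 1)) = 1 := by
  have hstep : ∀ (j : ℕ) (B : Matrix (Fin n) (Fin n) R),
      (∀ i i', (B - 1) i i' ∈ N ^ (j + 1)) →
      ∀ i i', (B ^ s - 1) i i' ∈ N ^ (j + 2) := by
    intro j B hB i i'
    set m := B - 1 with hm
    have hB' : B = m + 1 := by rw [hm, sub_add_cancel]
    have hexp : B ^ s = ∑ t ∈ Finset.range (s + 1), m ^ t * (1 : Matrix (Fin n) (Fin n) R) ^ (s - t) * (s.choose t : Matrix (Fin n) (Fin n) R) := by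
      rw [hB']; exact (Commute.one_right m).add_pow s
    have hexp' : B ^ s - 1 = ∑ t ∈ Finset.range s, m ^ (t + 1) * (s.choose (t + 1) : Matrix (Fin n) (Fin n) R) := by
      rw [hexp]
      simp only [one_pow, mul_one]
      rw [Finset.sum_range_succ' (fun t => m ^ t * (s.choose t : Matrix (Fin n) (Fin n) R)) s]
      simp
    rw [hexp', Matrix.sum_apply]
    refine sum_mem fun t _ => ?_
    have hcast : (m ^ (t + 1) * (s.choose (t + 1) : Matrix (Fin n) (Fin n) R)) i i'
        = (s.choose (t + 1) : R) * (m ^ (t + 1)) i i' := by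
      have : (s.choose (t + 1) : Matrix (Fin n) (Fin n) R) = (s.choose (t + 1) : ℕ) • (1 : Matrix (Fin n) (Fin n) R) := by
        simp [nsmul_eq_mul]
      rw [this, mul_smul_comm, mul_one, Matrix.smul_apply]
      simp [nsmul_eq_mul]
    rw [hcast]
    rcases Nat.eq_or_lt_of_le (Nat.zero_le t) with h0 | h1
    · -- t = 0 : term is `s • m`, use `(s : R) ∈ N`
      subst h0
      simp only [zero_add, pow_one, Nat.choose_one_right]
      have : (s : R) * m i i' ∈ N * N ^ (j + 1) := Ideal.mul_mem_mul hsN (hB i i')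
      rwa [← pow_succ'] at this
    · -- t ≥ 1 : `m ^ (t+1)` has entries in `N ^ ((j+1)*(t+1)) ⊆ N ^ (j+2)`
      have hmem : (m ^ (t + 1)) i i' ∈ (N ^ (j + 1)) ^ (t + 1) :=
        entries_pow_mem hB (t + 1) (by omega) i i'
      rw [← pow_mul] at hmem
      have hle : N ^ ((j + 1) * (t + 1)) ≤ N ^ (j + 2) :=
        Ideal.pow_le_pow_right (by nlinarith)
      exact Ideal.mul_mem_left _ _ (hle hmem)
  have main : ∀ t : ℕ, ∀ i i', (A ^ (s ^ t) - 1) i i' ∈ N ^ (t + 1) := by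
    intro t
    induction t with
    | zero => simpa using hA
    | succ t ih =>
      intro i i'
      have : A ^ (s ^ (t + 1)) = (A ^ (s ^ t)) ^ s := by
        rw [← pow_mul, pow_succ]
      rw [this]
      exact hstep t _ ih i i'
  have := main (k - 1)
  rw [Nat.sub_add_cancel (by omega), hNk] at this
  have hz : A ^ (s ^ (k - 1)) - 1 = 0 := by
    ext i i'
    have h0 := this i i'
    rw [Ideal.mem_bot] at h0
    simpa using h0
  exact sub_eq_zero.mp hz

end Aux

/-- Let `R` be a commutative ring with identity, `N` a
nilpotent ideal of `R` of nilpotency index `k ≥ 2`, and `s > 1` the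
characteristic of `R/N`.  For `f ∈ Mₙ(R)`, the reduced matrix `[f i j + N]` is
a unit of `Mₙ(R/N)` iff every matrix congruent to `f` entrywise modulo `N` is a
unit of `Mₙ(R)`; for each such `x`, `x⁻¹ = g * (x*g) ^ (s^(k-1) - 1)` where `g`
is any matrix with `[f i j + N] * [g i j + N] = 1`; and if `R` is finite then
`|Mₙ(R)ˣ| = |Mₙ(R/N)ˣ| * |N| ^ (n²)`. -/
theorem nilpotent_ideal_matrix_unit_lift {R : Type*} [CommRing R] (n : ℕ)
    (N : Ideal R) (k : ℕ) (hk : 2 ≤ k) (hNk : N ^ k = ⊥) (hNk' : N ^ (k - 1) ≠ ⊥)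
    (s : ℕ) (hs : 1 < s) (hchar : CharP (R ⧸ N) s)
    (f : Matrix (Fin n) (Fin n) R) :
    (IsUnit ((Ideal.Quotient.mk N).mapMatrix f) ↔
      ∀ x : Matrix (Fin n) (Fin n) R, (∀ i j, (x - f) i j ∈ N) → IsUnit x) ∧
    (∀ g : Matrix (Fin n) (Fin n) R,
      (Ideal.Quotient.mk N).mapMatrix f * (Ideal.Quotient.mk N).mapMatrix g = 1 →
      ∀ x : Matrix (Fin n) (Fin n) R, (∀ i j, (x - f) i j ∈ N) →
        x * (g * (x * g) ^ (s ^ (k - 1) - 1)) = 1 ∧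
        (g * (x * g) ^ (s ^ (k - 1) - 1)) * x = 1) ∧
    (Finite R → Nat.card (Matrix (Fin n) (Fin n) R)ˣ =
      Nat.card (Matrix (Fin n) (Fin n) (R ⧸ N))ˣ * Nat.card N ^ (n ^ 2)) := by
  set π : Matrix (Fin n) (Fin n) R →+* Matrix (Fin n) (Fin n) (R ⧸ N) :=
    (Ideal.Quotient.mk N).mapMatrix with hπ
  have hπapp : ∀ (x : Matrix (Fin n) (Fin n) R) i j, π x i j = Ideal.Quotient.mk N (x i j) := by
    intro x i j; simp [hπ, RingHom.mapMatrix_apply, Matrix.map_apply]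
  have hπsurj : Function.Surjective π := by
    intro y
    refine ⟨Matrix.of fun i j => (Ideal.Quotient.mk_surjective (y i j)).choose, ?_⟩
    ext i j
    rw [hπapp]
    exact (Ideal.Quotient.mk_surjective (y i j)).choose_spec
  have hsN : (s : R) ∈ N := by
    have h0 : ((s : ℕ) : R ⧸ N) = 0 := CharP.cast_eq_zero (R ⧸ N) s
    rw [← map_natCast (Ideal.Quotient.mk N) s, Ideal.Quotient.eq_zero_iff_mem] at h0
    exact h0
  -- entrywise congruence gives equal images
  have hcong : ∀ x : Matrix (Fin n) (Fin n) R, (∀ i j, (x - f) i j ∈ N) → π x = π f := by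
    intro x hx
    ext i j
    rw [hπapp, hπapp, Ideal.Quotient.eq]
    simpa [Matrix.sub_apply] using hx i j
  -- Part 2
  have part2 : ∀ g : Matrix (Fin n) (Fin n) R, π f * π g = 1 →
      ∀ x : Matrix (Fin n) (Fin n) R, (∀ i j, (x - f) i j ∈ N) →
        x * (g * (x * g) ^ (s ^ (k - 1) - 1)) = 1 ∧
        (g * (x * g) ^ (s ^ (k - 1) - 1)) * x = 1 := by
    intro g hg x hx
    have hxg : π (x * g) = 1 := by rw [map_mul, hcong x hx, hg]
    have hmem : ∀ i j, (x * g - 1) i j ∈ N := by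
      intro i j
      have : π (x * g - 1) i j = 0 := by rw [map_sub, hxg]; simp
      rw [hπapp] at this
      rwa [Ideal.Quotient.eq_zero_iff_mem] at this
    have hpow : (x * g) ^ (s ^ (k - 1)) = 1 :=
      pow_char_eq_one hk hNk (le_of_lt hs) hsN hmem
    have hse : 1 ≤ s ^ (k - 1) := Nat.one_le_pow _ _ (by omega)
    have h1 : x * (g * (x * g) ^ (s ^ (k - 1) - 1)) = 1 := by
      calc x * (g * (x * g) ^ (s ^ (k - 1) - 1))
          = (x * g) * (x * g) ^ (s ^ (k - 1) - 1) := (mul_assoc x g _).symm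
        _ = (x * g) ^ (s ^ (k - 1)) := by
            rw [← pow_succ']
            congr 1
            exact Nat.sub_add_cancel hse
        _ = 1 := hpow
    exact ⟨h1, mul_eq_one_comm.mp h1⟩
  refine ⟨?_, part2, ?_⟩
  · -- Part 1
    constructor
    · intro hu x hx
      obtain ⟨u, hu'⟩ := hu
      obtain ⟨g, hg⟩ := hπsurj (↑u⁻¹)
      have hfg : π f * π g = 1 := by rw [hg, ← hu']; exact u.mul_inv
      obtain ⟨h1, h2⟩ := part2 g hfg x hx
      exact ⟨⟨x, _, h1, h2⟩, rfl⟩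
    · intro h
      have : IsUnit f := h f (by simp)
      exact this.map π
  · -- Part 3 : counting
    intro hR
    have hRN : Finite (R ⧸ N) := Quotient.finite _
    -- every lift of a unit is a unit
    have key : ∀ x : Matrix (Fin n) (Fin n) R, IsUnit (π x) ↔ IsUnit x := by
      intro x
      constructor
      · intro hu
        obtain ⟨u, hu'⟩ := hu
        obtain ⟨g, hg⟩ := hπsurj (↑u⁻¹)
        have hfg : π x * π g = 1 := by rw [hg, ← hu']; exact u.mul_inv
        have hmem : ∀ i j, (x * g - 1) i j ∈ N := by
          intro i j
          have : π (x * g - 1) i j = 0 := by rw [map_sub, map_mul, hfg]; simp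
          rw [hπapp] at this
          rwa [Ideal.Quotient.eq_zero_iff_mem] at this
        have hpow : (x * g) ^ (s ^ (k - 1)) = 1 :=
          pow_char_eq_one hk hNk (le_of_lt hs) hsN hmem
        have hse : 1 ≤ s ^ (k - 1) := Nat.one_le_pow _ _ (by omega)
        have h1 : x * (g * (x * g) ^ (s ^ (k - 1) - 1)) = 1 := by
          calc x * (g * (x * g) ^ (s ^ (k - 1) - 1))
              = (x * g) * (x * g) ^ (s ^ (k - 1) - 1) := (mul_assoc x g _).symm
            _ = (x * g) ^ (s ^ (k - 1)) := by
                rw [← pow_succ']; congr 1; exact Nat.sub_add_cancel hse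
            _ = 1 := hpow
        exact ⟨⟨x, _, h1, mul_eq_one_comm.mp h1⟩, rfl⟩
      · intro hu; exact hu.map π
    classical
    -- units of a monoid ≃ subtype of units
    have unitsEquiv : ∀ (M : Type _) [Monoid M], Mˣ ≃ {x : M // IsUnit x} := by
      intro M _
      exact { toFun := fun u => ⟨↑u, u.isUnit⟩
              invFun := fun x => x.2.unit
              left_inv := fun u => Units.ext (IsUnit.unit_spec _)
              right_inv := fun x => Subtype.ext x.2.unit_spec }
    -- the map on unit subtypes
    let T := {y : Matrix (Fin n) (Fin n) (R ⧸ N) // IsUnit y}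
    let S := {x : Matrix (Fin n) (Fin n) R // IsUnit x}
    let φ : S → T := fun x => ⟨π x.1, x.2.map π⟩
    -- fiber of φ over t ≃ fiber of π over t.1
    have fiberEquiv : ∀ t : T, {x : S // φ x = t} ≃ {x : Matrix (Fin n) (Fin n) R // π x = t.1} := by
      intro t
      exact { toFun := fun x => ⟨x.1.1, congrArg Subtype.val x.2⟩
              invFun := fun x => ⟨⟨x.1, (key x.1).mp (by rw [x.2]; exact t.2)⟩, Subtype.ext x.2⟩
              left_inv := fun x => Subtype.ext (Subtype.ext rfl)
              right_inv := fun x => rfl }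
    -- fiber of π over any y ≃ matrices with entries in N ≃ (Fin n → Fin n → N)
    let K := Fin n → Fin n → N
    have fiberπEquiv : ∀ y : Matrix (Fin n) (Fin n) (R ⧸ N),
        {x : Matrix (Fin n) (Fin n) R // π x = y} ≃ K := by
      intro y
      have hex := hπsurj y
      set x₀ := hex.choose with hx₀def
      have hx₀ : π x₀ = y := hex.choose_spec
      have mem_iff : ∀ x : Matrix (Fin n) (Fin n) R, π x = y ↔ ∀ i j, (x - x₀) i j ∈ N := by
        intro x
        rw [← hx₀]
        constructor
        · intro h i j
          have : π (x - x₀) i j = 0 := by rw [map_sub, h]; simp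
          rw [hπapp] at this
          rwa [Ideal.Quotient.eq_zero_iff_mem] at this
        · intro h
          ext i j
          rw [hπapp, hπapp, Ideal.Quotient.eq]
          simpa [Matrix.sub_apply] using h i j
      exact
        { toFun := fun x i j => ⟨(x.1 - x₀) i j, (mem_iff x.1).mp x.2 i j⟩
          invFun := fun F => ⟨Matrix.of (fun i j => (F i j : R)) + x₀, by
            rw [mem_iff]; intro i j; simpa using (F i j).2⟩
          left_inv := fun x => by
            apply Subtype.ext
            ext i j
            simp [Matrix.sub_apply, Matrix.add_apply]
          right_inv := fun F => by
            funext i j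
            apply Subtype.ext
            simp [Matrix.sub_apply, Matrix.add_apply] }
    -- assemble the global equivalence
    have bigEquiv : (Matrix (Fin n) (Fin n) R)ˣ ≃ (Matrix (Fin n) (Fin n) (R ⧸ N))ˣ × K := by
      refine (unitsEquiv _).trans ?_
      refine ((Equiv.sigmaFiberEquiv φ).symm.trans ?_)
      refine (Equiv.sigmaCongrRight fun t => (fiberEquiv t).trans (fiberπEquiv t.1)).trans ?_
      refine (Equiv.sigmaEquivProd T K).trans ?_
      exact Equiv.prodCongrLeft fun _ => (unitsEquiv _).symm
    rw [Nat.card_congr bigEquiv, Nat.card_prod]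
    congr 1
    have : Nat.card K = Nat.card N ^ (n * n) := by
      rw [Nat.card_fun, Nat.card_fun, Nat.card_eq_fintype_card (α := Fin n), Fintype.card_fin,
        ← pow_mul]
    rw [this, pow_two]
end

section
/- Let R be a commutative ring with identity, a ∈ R a nilpotent element of index k, and s > 1 the characteristic of R/⟨a⟩. For f = [f_{ij}] ∈ M_n(R), the matrix [f_{ij} + ⟨a⟩] is a unit of M_n(R/⟨a⟩) if and only if f + M_n(⟨a⟩) ⊆ (M_n(R))*, and for each x ∈ f + M_n(⟨a⟩), x^{-1} = g·(x·g)^{s^{k−1} − 1}, where g = [g_{ij}] ∈ M_n(R) is any matrix with [f_{ij} + ⟨a⟩]·[g_{ij} + ⟨a⟩] equal to the identity matrix of M_n(R/⟨a⟩). -/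
private lemma aux_mul_mem {R : Type*} [CommRing R] {n : ℕ} {I J : Ideal R}
    {A B : Matrix (Fin n) (Fin n) R} (hA : ∀ i j, A i j ∈ I) (hB : ∀ i j, B i j ∈ J) :
    ∀ i j, (A * B) i j ∈ I * J := by
  intro i j
  rw [Matrix.mul_apply]
  exact Ideal.sum_mem _ fun l _ => Ideal.mul_mem_mul (hA i l) (hB l j)

private lemma aux_step {R : Type*} [CommRing R] {n : ℕ} {I : Ideal R} {s : ℕ}
    (hsI : (s : R) ∈ I) {u : Matrix (Fin n) (Fin n) R} {t : ℕ}
    (hu : ∀ i j, (u - 1) i j ∈ I ^ (t + 1)) :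
    ∀ i j, (u ^ s - 1) i j ∈ I ^ (t + 2) := by
  have hpow : ∀ m : ℕ, ∀ i j, (u ^ m - 1) i j ∈ I ^ (t + 1) := by
    intro m i j
    rw [← geom_sum_mul, Matrix.mul_apply]
    exact Ideal.sum_mem _ fun l _ => Ideal.mul_mem_left _ _ (hu l j)
  have hT : ∀ i j, ((∑ m ∈ Finset.range s, u ^ m) - (s : R) • 1) i j ∈ I ^ (t + 1) := by
    intro i j
    have h : (∑ m ∈ Finset.range s, u ^ m) - (s : R) • 1
        = ∑ m ∈ Finset.range s, (u ^ m - 1) := by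
      rw [Finset.sum_sub_distrib]
      congr 1
      simp only [Finset.sum_const, Finset.card_range]
      ext i j
      simp [Matrix.smul_apply, Matrix.one_apply, mul_ite]
    rw [h, Matrix.sum_apply]
    exact Ideal.sum_mem _ fun m _ => hpow m i j
  have heq : u ^ s - 1 = ((∑ m ∈ Finset.range s, u ^ m) - (s : R) • 1) * (u - 1)
      + (s : R) • (u - 1) := by
    rw [sub_mul, smul_mul_assoc, one_mul, sub_add_cancel, geom_sum_mul]
  intro i j
  rw [heq, Matrix.add_apply]
  have h1 : (((∑ m ∈ Finset.range s, u ^ m) - (s : R) • 1) * (u - 1)) i j ∈ I ^ (t + 2) := by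
    have hm := aux_mul_mem hT hu i j
    have hle : I ^ (t + 1) * I ^ (t + 1) ≤ I ^ (t + 2) := by
      rw [← pow_add]
      exact Ideal.pow_le_pow_right (by omega)
    exact hle hm
  have h2 : ((s : R) • (u - 1)) i j ∈ I ^ (t + 2) := by
    rw [Matrix.smul_apply, smul_eq_mul]
    have hm := Ideal.mul_mem_mul hsI (hu i j)
    rwa [← pow_succ'] at hm
  exact Ideal.add_mem _ h1 h2

private lemma aux_key {R : Type*} [CommRing R] {n : ℕ} {I : Ideal R} {s : ℕ}
    (hsI : (s : R) ∈ I) {u : Matrix (Fin n) (Fin n) R}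
    (hu : ∀ i j, (u - 1) i j ∈ I) (t : ℕ) :
    ∀ i j, (u ^ s ^ t - 1) i j ∈ I ^ (t + 1) := by
  induction t with
  | zero => simpa using hu
  | succ t ih =>
    have h : u ^ s ^ (t + 1) = (u ^ s ^ t) ^ s := by rw [← pow_mul, pow_succ]
    rw [h]
    exact aux_step hsI ih

/-- Let `R` be a commutative ring with identity, `a ∈ R` a
nilpotent element of index `k`, and `s > 1` the characteristic of `R/⟨a⟩`.  For
`f ∈ Mₙ(R)`, the reduced matrix `[f i j + ⟨a⟩]` is a unit of `Mₙ(R/⟨a⟩)` iff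
every matrix congruent to `f` entrywise modulo `⟨a⟩` is a unit of `Mₙ(R)`; and
for each such `x`, `x⁻¹ = g * (x*g) ^ (s^(k-1) - 1)` where `g` is any matrix
with `[f i j + ⟨a⟩] * [g i j + ⟨a⟩] = 1`. -/
theorem nilpotent_element_matrix_unit_lift {R : Type*} [CommRing R] (n : ℕ)
    (a : R) (k : ℕ) (hak : a ^ k = 0) (hak' : a ^ (k - 1) ≠ 0)
    (s : ℕ) (hs : 1 < s) (hchar : CharP (R ⧸ Ideal.span {a}) s)
    (f : Matrix (Fin n) (Fin n) R) :
    (IsUnit ((Ideal.Quotient.mk (Ideal.span {a})).mapMatrix f) ↔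
      ∀ x : Matrix (Fin n) (Fin n) R, (∀ i j, (x - f) i j ∈ Ideal.span {a}) → IsUnit x) ∧
    (∀ g : Matrix (Fin n) (Fin n) R,
      (Ideal.Quotient.mk (Ideal.span {a})).mapMatrix f *
        (Ideal.Quotient.mk (Ideal.span {a})).mapMatrix g = 1 →
      ∀ x : Matrix (Fin n) (Fin n) R, (∀ i j, (x - f) i j ∈ Ideal.span {a}) →
        x * (g * (x * g) ^ (s ^ (k - 1) - 1)) = 1 ∧
        (g * (x * g) ^ (s ^ (k - 1) - 1)) * x = 1) := by
  set I := Ideal.span {a} with hI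
  have hk : 1 ≤ k := by
    rcases Nat.eq_zero_or_pos k with h | h
    · subst h; simp at hak; exact absurd (by simpa using hak) hak'
    · exact h
  have hsI : (s : R) ∈ I := by
    have h := CharP.cast_eq_zero (R ⧸ I) s
    rwa [← map_natCast (Ideal.Quotient.mk I), Ideal.Quotient.eq_zero_iff_mem] at h
  have hIk : I ^ k = ⊥ := by
    rw [hI, Ideal.span_singleton_pow, hak, Ideal.span_singleton_eq_bot.mpr rfl]
  have hspow : 1 ≤ s ^ (k - 1) := Nat.one_le_pow _ _ (by omega)
  -- main computation: (x*g)^(s^(k-1)) = 1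
  have main : ∀ g x : Matrix (Fin n) (Fin n) R,
      (Ideal.Quotient.mk I).mapMatrix f * (Ideal.Quotient.mk I).mapMatrix g = 1 →
      (∀ i j, (x - f) i j ∈ I) → (x * g) ^ s ^ (k - 1) = 1 := by
    intro g x hg hx
    have hxf : (Ideal.Quotient.mk I).mapMatrix x = (Ideal.Quotient.mk I).mapMatrix f := by
      ext i j
      simp only [RingHom.mapMatrix_apply, Matrix.map_apply]
      rw [Ideal.Quotient.mk_eq_mk_iff_sub_mem]
      exact hx i j
    have hu : ∀ i j, (x * g - 1) i j ∈ I := by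
      intro i j
      have h0 : (Ideal.Quotient.mk I).mapMatrix (x * g - 1) = 0 := by
        rw [map_sub, map_mul, map_one, hxf, hg, sub_self]
      have h1 := congrFun (congrFun h0 i) j
      simp only [RingHom.mapMatrix_apply, Matrix.map_apply, Matrix.zero_apply] at h1
      exact Ideal.Quotient.eq_zero_iff_mem.mp h1
    have hfin := aux_key hsI hu (k - 1)
    rw [Nat.sub_add_cancel hk, hIk] at hfin
    ext i j
    have h2 := hfin i j
    rwa [Ideal.mem_bot, Matrix.sub_apply, sub_eq_zero] at h2
  have inv_part : ∀ g : Matrix (Fin n) (Fin n) R,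
      (Ideal.Quotient.mk I).mapMatrix f * (Ideal.Quotient.mk I).mapMatrix g = 1 →
      ∀ x : Matrix (Fin n) (Fin n) R, (∀ i j, (x - f) i j ∈ I) →
      x * (g * (x * g) ^ (s ^ (k - 1) - 1)) = 1 ∧
      (g * (x * g) ^ (s ^ (k - 1) - 1)) * x = 1 := by
    intro g hg x hx
    have h1 : x * (g * (x * g) ^ (s ^ (k - 1) - 1)) = 1 := by
      rw [← mul_assoc]
      have := main g x hg hx
      calc x * g * (x * g) ^ (s ^ (k - 1) - 1)
          = (x * g) ^ (s ^ (k - 1) - 1 + 1) := (pow_succ' _ _).symm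
        _ = 1 := by rw [Nat.sub_add_cancel hspow, this]
    exact ⟨h1, mul_eq_one_comm.mp h1⟩
  constructor
  · constructor
    · intro hunit x hx
      obtain ⟨u, hu⟩ := hunit
      have hsurj : ∀ i j, ∃ r : R, Ideal.Quotient.mk I r = (↑u⁻¹ : Matrix (Fin n) (Fin n) (R ⧸ I)) i j :=
        fun i j => Ideal.Quotient.mk_surjective _
      choose g hgspec using hsurj
      have hg : (Ideal.Quotient.mk I).mapMatrix (Matrix.of g) = (↑u⁻¹ : Matrix (Fin n) (Fin n) (R ⧸ I)) := by
        ext i j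
        simpa [RingHom.mapMatrix_apply, Matrix.map_apply] using hgspec i j
      have hg1 : (Ideal.Quotient.mk I).mapMatrix f *
          (Ideal.Quotient.mk I).mapMatrix (Matrix.of g) = 1 := by
        rw [hg, ← hu]
        exact u.mul_inv
      obtain ⟨h1, h2⟩ := inv_part (Matrix.of g) hg1 x hx
      exact isUnit_iff_exists.mpr ⟨_, h1, h2⟩
    · intro h
      have hf : IsUnit f := h f (fun i j => by simp)
      exact hf.map (Ideal.Quotient.mk I).mapMatrix
  · exact inv_part
end

section
/- Let m ≥ 2 be an integer with prime factorization m = p_1^{r_1} p_2^{r_2} ⋯ p_j^{r_j}, let G be a finite commutative group, set k = max{r_1, ..., r_j}, c_i = (p_1 p_2 ⋯ p_j)/p_i, and let t_i be a natural number with t_i·c_i ≡ 1 (mod p_i). Suppose f_1, ..., f_j ∈ ℤ_m G are such that for each i the reduction of f_i modulo p_i is a unit of ℤ_{p_i}G, and let g_i ∈ ℤ_m G be such that the reduction of f_i·g_i modulo p_i is 1 in ℤ_{p_i}G. Then f = t_1 c_1 f_1 + ⋯ + t_j c_j f_j is a unit in ℤ_m G, with f^{-1} = (t_1 c_1 g_1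 + ⋯ + t_j c_j g_j)^{(p_1 p_2 ⋯ p_j)^{k−1}} · (t_1 c_1 f_1 + ⋯ + t_j c_j f_j)^{(p_1 p_2 ⋯ p_j)^{k−1} − 1}. Moreover, |(ℤ_m G)*| = (m/(p_1 p_2 ⋯ p_j))^{|G|} · |(ℤ_{p_1 p_2 ⋯ p_j}G)*|. -/
/-!
Let `P = ∏ pᵢ`. Reduction `ℤ_m G → ℤ_P G` is surjective and its kernel `P · ℤ_m G` is nil,
because `m ∣ P ^ k`. A surjective ring map with nil kernel is surjective on units, and `x ↦ 1 + x`
identifies its ring kernel, of size `(m / P) ^ |G|`, with the kernel on units.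
Since `tᵢ cᵢ ≡ 1 (mod pᵢ)` and `pᵢ ∣ c_l` for `l ≠ i`, the product of `F = ∑ tᵢ cᵢ fᵢ` and
`H = ∑ tᵢ cᵢ gᵢ` reduces to `1` modulo every `pᵢ`, so `F H = 1 + P x`,
and `(1 + P x) ^ P ^ (k - 1) ∈ 1 + P ^ k ℤ_m G = {1}`.
-/

open MonoidAlgebra in
/-- Reduction of coefficients: the canonical ring homomorphism
`ℤ_m G →+* ℤ_n G` induced by the reduction `ℤ_m → ℤ_n` (for `n ∣ m`),
sending `∑ cᵧ γ` to `∑ (cᵧ mod n) γ`. -/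
noncomputable def zmodGroupRingReduce (m n : ℕ) (h : n ∣ m) (G : Type*) [CommGroup G] :
    MonoidAlgebra (ZMod m) G →+* MonoidAlgebra (ZMod n) G :=
  liftNCRingHom (singleOneRingHom.comp (ZMod.castHom h (ZMod n))) (of (ZMod n) G)
    (fun _ _ => Commute.all _ _)

open MonoidAlgebra Function Finset

section NilpotentKernel

variable {R S : Type*} [CommRing R] [CommRing S] {f : R →+* S}

theorem RingHom.isLocalHom_of_surjective_of_ker_isNilpotent (hf : Surjective f)
    (hnil : ∀ x ∈ RingHom.ker f, IsNilpotent x) : IsLocalHom f where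
  map_nonunit x hx := by
    obtain ⟨y, hy⟩ := hf ↑hx.unit⁻¹
    have hxy : IsUnit (1 + (x * y - 1)) :=
      (hnil _ (by simp [RingHom.mem_ker, hy])).isUnit_one_add
    rw [add_sub_cancel] at hxy
    exact isUnit_of_mul_isUnit_left hxy

noncomputable def RingHom.unitsMapKerEquivKer_s19 (hnil : ∀ x ∈ RingHom.ker f, IsNilpotent x) :
    (Units.map f.toMonoidHom).ker ≃ RingHom.ker f where
  toFun u := ⟨(u : Rˣ) - 1, by
    have hu := congr_arg Units.val (MonoidHom.mem_ker.1 u.2)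
    simpa [RingHom.mem_ker, sub_eq_zero] using hu⟩
  invFun x := ⟨(hnil x x.2).isUnit_one_add.unit, by
    ext; simp [RingHom.mem_ker.1 x.2]⟩
  left_inv u := by ext; simp
  right_inv x := by ext; simp

theorem RingHom.card_units_eq_mul_card_ker (hf : Surjective f)
    (hnil : ∀ x ∈ RingHom.ker f, IsNilpotent x) :
    Nat.card Rˣ = Nat.card Sˣ * Nat.card (RingHom.ker f) := by
  have := RingHom.isLocalHom_of_surjective_of_ker_isNilpotent hf hnil
  rw [(Units.map f.toMonoidHom).ker.card_eq_card_quotient_mul_card_subgroup,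
    Nat.card_congr (QuotientGroup.quotientKerEquivOfSurjective _
      (IsLocalRing.surjective_units_map_of_local_ringHom f hf this)).toEquiv,
    Nat.card_congr (RingHom.unitsMapKerEquivKer_s19 hnil)]

end NilpotentKernel

theorem RingHom.card_eq_mul_card_ker {R S : Type*} [Ring R] [Ring S] {f : R →+* S}
    (hf : Surjective f) : Nat.card R = Nat.card S * Nat.card (RingHom.ker f) := by
  rw [f.toAddMonoidHom.ker.card_eq_card_quotient_mul_card_addSubgroup,
    Nat.card_congr (QuotientAddGroup.quotientKerEquivOfSurjective _ hf).toEquiv]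
  rfl

theorem Nat.dvd_prod_div_of_ne {ι : Type*} [Fintype ι] {p : ι → ℕ} {i i' : ι} (hi' : 0 < p i')
    (h : i ≠ i') : p i ∣ (∏ l, p l) / p i' := by
  classical
  rw [← mul_prod_erase _ p (mem_univ i'), Nat.mul_div_cancel_left _ hi']
  exact dvd_prod_of_mem p (mem_erase.2 ⟨h, mem_univ i⟩)

theorem natCast_prod_primes_dvd {A ι : Type*} [CommRing A] [Fintype ι] {p : ι → ℕ}
    (hp : ∀ i, (p i).Prime) (hinj : Injective p) {x : A} (h : ∀ i, (p i : A) ∣ x) :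
    ((∏ i, p i : ℕ) : A) ∣ x := by
  rw [Nat.cast_prod]
  exact Fintype.prod_dvd_of_coprime
    (fun i i' hne => ((Nat.coprime_primes (hp i) (hp i')).2 (hinj.ne hne)).cast) h

theorem pow_pow_eq_one_of_natCast_dvd_sub_one {A : Type*} [CommRing A] {P t : ℕ} {a : A}
    (hP : ((P ^ (t + 1) : ℕ) : A) = 0) (ha : (P : A) ∣ a - 1) : a ^ P ^ t = 1 := by
  have := dvd_sub_pow_of_dvd_sub ha t
  rwa [one_pow, ← Nat.cast_pow, hP, zero_dvd_iff, sub_eq_zero] at this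

theorem card_zmodGroupRing {G : Type*} [Finite G] (m : ℕ) :
    Nat.card (MonoidAlgebra (ZMod m) G) = m ^ Nat.card G := by
  rw [Nat.card_congr (coeffEquiv.trans Finsupp.equivFunOnFinite), Nat.card_fun, Nat.card_zmod]

theorem natCast_zmodGroupRing_eq_zero {G : Type*} [Monoid G] {m N : ℕ} (h : m ∣ N) :
    (N : MonoidAlgebra (ZMod m) G) = 0 := by
  rw [← map_natCast (algebraMap (ZMod m) _), (ZMod.natCast_eq_zero_iff N m).2 h, map_zero]

section ZModGroupRing

variable {G : Type*} [CommGroup G] {m n : ℕ}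

theorem zmodGroupRingReduce_eq_mapRingHom (h : n ∣ m) :
    zmodGroupRingReduce m n h G = mapRingHom G (ZMod.castHom h (ZMod n)) := by
  ext <;> simp [zmodGroupRingReduce]

theorem zmodGroupRingReduce_surjective (h : n ∣ m) :
    Surjective (zmodGroupRingReduce m n h G) := by
  rw [zmodGroupRingReduce_eq_mapRingHom, coe_mapRingHom]
  exact map_surjective _ (ZMod.castHom_surjective h)

theorem zmodGroupRingReduce_eq_zero_iff [NeZero m] (h : n ∣ m) (x : MonoidAlgebra (ZMod m) G) :
    zmodGroupRingReduce m n h G x = 0 ↔ (n : MonoidAlgebra (ZMod m) G) ∣ x := by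
  refine ⟨fun hx => ?_, ?_⟩
  · have hdvd (a : G) : n ∣ (x.coeff a).val := by
      have hxa := congr_arg (·.coeff a) hx
      simpa [zmodGroupRingReduce_eq_mapRingHom, ← ZMod.natCast_val, ZMod.natCast_eq_zero_iff]
        using hxa
    refine ⟨ofCoeff (x.coeff.mapRange (fun c => ((c.val / n : ℕ) : ZMod m)) (by simp)), ?_⟩
    ext a
    rw [← nsmul_eq_mul, coeff_smul, Finsupp.smul_apply, coeff_ofCoeff, Finsupp.mapRange_apply,
      nsmul_eq_mul, ← Nat.cast_mul, Nat.mul_div_cancel' (hdvd a), ZMod.natCast_val, ZMod.cast_id]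
  · rintro ⟨y, rfl⟩
    rw [map_mul, map_natCast, natCast_zmodGroupRing_eq_zero dvd_rfl, zero_mul]

theorem pow_eq_zero_of_zmodGroupRingReduce_eq_zero [NeZero m] {k : ℕ} (h : n ∣ m)
    (hk : m ∣ n ^ k) {x : MonoidAlgebra (ZMod m) G} (hx : zmodGroupRingReduce m n h G x = 0) :
    x ^ k = 0 := by
  obtain ⟨y, rfl⟩ := (zmodGroupRingReduce_eq_zero_iff h x).1 hx
  rw [mul_pow, ← Nat.cast_pow, natCast_zmodGroupRing_eq_zero hk, zero_mul]

theorem card_units_zmodGroupRing [Finite G] [NeZero m] {k : ℕ} (h : n ∣ m) (hk : m ∣ n ^ k) :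
    Nat.card (MonoidAlgebra (ZMod m) G)ˣ =
      (m / n) ^ Nat.card G * Nat.card (MonoidAlgebra (ZMod n) G)ˣ := by
  have hsurj := zmodGroupRingReduce_surjective (G := G) h
  have hcard := RingHom.card_eq_mul_card_ker hsurj
  rw [card_zmodGroupRing, card_zmodGroupRing] at hcard
  have hn : 0 < n ^ Nat.card G := pow_pos (Nat.pos_of_dvd_of_pos h (NeZero.pos m)) _
  rw [RingHom.card_units_eq_mul_card_ker hsurj fun x hx =>
      ⟨k, pow_eq_zero_of_zmodGroupRingReduce_eq_zero h hk hx⟩,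
    Nat.div_pow h, hcard, Nat.mul_div_cancel_left _ hn, mul_comm]

theorem zmodGroupRingReduce_sum_nsmul {ι : Type*} [Fintype ι] (h : n ∣ m) (c : ι → ℕ)
    (u : ι → MonoidAlgebra (ZMod m) G) {i : ι} (hci : c i ≡ 1 [MOD n])
    (hc : ∀ i' ≠ i, n ∣ c i') :
    zmodGroupRingReduce m n h G (∑ i', c i' • u i') = zmodGroupRingReduce m n h G (u i) := by
  rw [map_sum, sum_eq_single i (fun i' _ hi' => ?_) (by simp), map_nsmul,
    ← Nat.cast_smul_eq_nsmul (ZMod n), (ZMod.natCast_eq_natCast_iff _ 1 n).2 hci, Nat.cast_one,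
    one_smul]
  rw [map_nsmul, ← Nat.cast_smul_eq_nsmul (ZMod n), (ZMod.natCast_eq_zero_iff _ n).2 (hc i' hi'),
    zero_smul]

end ZModGroupRing

theorem zmod_groupRing_unit_crt'_general {G : Type*} [CommGroup G] [Finite G]
    (m : ℕ) (j : ℕ) (p r : Fin j → ℕ)
    (hp : ∀ i, (p i).Prime) (hpinj : Function.Injective p)
    (hr : ∀ i, 1 ≤ r i) (hm : m = ∏ i, p i ^ r i)
    (hdvd : ∀ i, p i ∣ m)
    (t : Fin j → ℕ) (ht : ∀ i, t i * ((∏ i', p i') / p i) ≡ 1 [MOD p i])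
    (f g : Fin j → MonoidAlgebra (ZMod m) G)
    (hg : ∀ i, zmodGroupRingReduce m (p i) (hdvd i) G (f i * g i) = 1) :
    IsUnit (∑ i, (t i * ((∏ i', p i') / p i)) • f i) ∧
    (∑ i, (t i * ((∏ i', p i') / p i)) • f i) *
      ((∑ i, (t i * ((∏ i', p i') / p i)) • g i) ^
          ((∏ i, p i) ^ (Finset.univ.sup r - 1)) *
        (∑ i, (t i * ((∏ i', p i') / p i)) • f i) ^
          ((∏ i, p i) ^ (Finset.univ.sup r - 1) - 1)) = 1 ∧
    Nat.card (MonoidAlgebra (ZMod m) G)ˣ =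
      (m / ∏ i, p i) ^ Nat.card G * Nat.card (MonoidAlgebra (ZMod (∏ i, p i)) G)ˣ := by
  set P := ∏ i, p i
  set k := univ.sup r
  set F := ∑ i, (t i * (P / p i)) • f i
  set H := ∑ i, (t i * (P / p i)) • g i
  have : NeZero m := ⟨hm ▸ prod_ne_zero_iff.2 fun i _ => pow_ne_zero _ (hp i).ne_zero⟩
  have hPm : P ∣ m :=
    hm ▸ prod_dvd_prod_of_dvd _ _ fun i _ => dvd_pow_self _ (Nat.one_le_iff_ne_zero.1 (hr i))
  have hmP : m ∣ P ^ k := by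
    rw [hm, ← prod_pow]
    exact prod_dvd_prod_of_dvd _ _ fun i _ => pow_dvd_pow _ (le_sup (mem_univ i))
  have hreduce (u : Fin j → MonoidAlgebra (ZMod m) G) (i : Fin j) :
      zmodGroupRingReduce m (p i) (hdvd i) G (∑ i', (t i' * (P / p i')) • u i') =
        zmodGroupRingReduce m (p i) (hdvd i) G (u i) :=
    zmodGroupRingReduce_sum_nsmul _ _ _ (ht i) fun i' hi' =>
      dvd_mul_of_dvd_right (Nat.dvd_prod_div_of_ne (hp i').pos hi'.symm) _
  have hFH : (F * H) ^ P ^ (k - 1) = 1 := by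
    refine pow_pow_eq_one_of_natCast_dvd_sub_one
      (natCast_zmodGroupRing_eq_zero (hmP.trans (pow_dvd_pow _ (by omega))))
      (natCast_prod_primes_dvd hp hpinj fun i => (zmodGroupRingReduce_eq_zero_iff (hdvd i) _).1 ?_)
    rw [map_sub, map_mul, hreduce, hreduce, ← map_mul, hg, map_one, sub_self]
  have hinv : F * (H ^ P ^ (k - 1) * F ^ (P ^ (k - 1) - 1)) = 1 := by
    rw [mul_left_comm, mul_pow_sub_one (pow_pos (prod_pos fun i _ => (hp i).pos) _).ne',
      ← mul_pow, mul_comm, hFH]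
  exact ⟨.of_mul_eq_one _ hinv, hinv, card_units_zmodGroupRing hPm hmP⟩

/-- Let `m ≥ 2` with prime factorization `m = ∏ i, p i ^ r i`,
`G` a finite commutative group, `k = max r i`, `cᵢ = (∏ i, p i) / p i`, and
`t i` natural numbers with `t i * cᵢ ≡ 1 (mod p i)`.  If `f i ∈ ℤ_m G` have
unit reductions modulo `p i`, with `g i` reducing to inverses of `f i` modulo
`p i`, then `F = ∑ i, (t i * cᵢ) • f i` is a unit of `ℤ_m G` whose inverse is
`(∑ i, (t i * cᵢ) • g i) ^ P ^ (k-1) * F ^ (P ^ (k-1) - 1)` where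
`P = ∏ i, p i`; moreover `|(ℤ_m G)ˣ| = (m / P) ^ |G| * |(ℤ_P G)ˣ|`. -/
theorem zmod_groupRing_unit_crt' {G : Type*} [CommGroup G] [Finite G]
    (m : ℕ) (hm2 : 2 ≤ m) (j : ℕ) (p r : Fin j → ℕ)
    (hp : ∀ i, (p i).Prime) (hpinj : Function.Injective p)
    (hr : ∀ i, 1 ≤ r i) (hm : m = ∏ i, p i ^ r i)
    (hdvd : ∀ i, p i ∣ m)
    (t : Fin j → ℕ) (ht : ∀ i, t i * ((∏ i', p i') / p i) ≡ 1 [MOD p i])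
    (f g : Fin j → MonoidAlgebra (ZMod m) G)
    (hf : ∀ i, IsUnit (zmodGroupRingReduce m (p i) (hdvd i) G (f i)))
    (hg : ∀ i, zmodGroupRingReduce m (p i) (hdvd i) G (f i * g i) = 1) :
    IsUnit (∑ i, (t i * ((∏ i', p i') / p i)) • f i) ∧
    (∑ i, (t i * ((∏ i', p i') / p i)) • f i) *
      ((∑ i, (t i * ((∏ i', p i') / p i)) • g i) ^
          ((∏ i, p i) ^ (Finset.univ.sup r - 1)) *
        (∑ i, (t i * ((∏ i', p i') / p i)) • f i) ^
          ((∏ i, p i) ^ (Finset.univ.sup r - 1) - 1)) = 1 ∧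
    Nat.card (MonoidAlgebra (ZMod m) G)ˣ =
      (m / ∏ i, p i) ^ Nat.card G * Nat.card (MonoidAlgebra (ZMod (∏ i, p i)) G)ˣ :=
  zmod_groupRing_unit_crt'_general m j p r hp hpinj hr hm hdvd t ht f g hg
end
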